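/- arXiv:1807.08065 — 2 statements merged into one kernel-verified Lean document; each statement's English description precedes it below -/
import Mathlib

section
/- Let V = V_b ∪ V_r be any partition of V into two nonempty classes, and let T_b and T_r be minimum spanning trees of V_b and V_r respectively. Then max{c(T_b), c(T_r)} ≤ 2·c(T) − (w_L + w_× + w_R). -/
open scoped Classical

noncomputable def cost {α : Type*} [Fintype α] (w : α → α → ℝ) (G : SimpleGraph α) : ℝ :=
  (∑ u : α, ∑ v : α, if G.Adj u v then w u v else 0) / 2

/-- `G` is a minimum spanning tree for the weight function `w`. -/
def IsMST {α : Type*} [Fintype α] (w : α → α → ℝ) (G : SimpleGraph α) : Prop :=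
  G.IsTree ∧ ∀ G' : SimpleGraph α, G'.IsTree → cost w G ≤ cost w G'

/-- Cost of a graph on the subtype of a subset `S`, w.r.t. the restricted weights. -/
noncomputable def subCost {V : Type*} [Fintype V] (w : V → V → ℝ) (S : Set V)
    (G : SimpleGraph S) : ℝ :=
  cost (fun u v : S => w u.1 v.1) G

/-- `G` is a minimum spanning tree of the subset `S` w.r.t. the restricted weights. -/
def IsSubMST {V : Type*} [Fintype V] (w : V → V → ℝ) (S : Set V) (G : SimpleGraph S) : Prop :=
  IsMST (fun u v : S => w u.1 v.1) G

/-- The maximum weight of an edge of `G` (`0` if `G` has no edges, since weights are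
nonnegative and `⨆` over an empty family of reals is `0`). -/
noncomputable def maxEdgeWeight {α : Type*} (w : α → α → ℝ) (G : SimpleGraph α) : ℝ :=
  ⨆ u, ⨆ v, ⨆ _ : G.Adj u v, w u v

/-- Maximum edge weight of a graph on a subset `S`, w.r.t. the restricted weights. -/
noncomputable def subMaxW {V : Type*} (w : V → V → ℝ) (S : Set V) (G : SimpleGraph S) : ℝ :=
  maxEdgeWeight (fun u v : S => w u.1 v.1) G

/-!
Both minimum spanning trees cost at most any walk through all of `V`: shortcutting the walk to
`Vb` (or `Vr`) makes it cheaper by the triangle inequality, and the edges of the shortened walk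
contain a spanning tree.

Such a walk comes from doubling `T`. A walk around a tree with prescribed ends traverses every
edge at most twice. Cut `T_L` at its heaviest edge `ab` into two subtrees; walk around the one
not containing `v_L`, ending at its endpoint of `ab`, cross `ab`, and walk around the other one,
ending at `v_L`. This costs `2 c(T_L) - w_L`. Crossing `e_×` and treating `T_R` in the same way
gives a walk of cost `2 c(T) - (w_L + w_× + w_R)`.
-/
open Finset SimpleGraph

section WalkCost

variable {α : Type*} (w : α → α → ℝ)

noncomputable def walkCost : List α → ℝ
  | [] => 0
  | [_] => 0
  | a :: b :: l => w a b + walkCost (b :: l)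

@[simp] lemma walkCost_nil : walkCost w [] = 0 := rfl

@[simp] lemma walkCost_singleton (a : α) : walkCost w [a] = 0 := rfl

@[simp] lemma walkCost_cons_cons (a b : α) (l : List α) :
    walkCost w (a :: b :: l) = w a b + walkCost w (b :: l) := rfl

lemma walkCost_append_cons (l : List α) (a : α) (l' : List α) :
    walkCost w (l ++ a :: l') = walkCost w (l ++ [a]) + walkCost w (a :: l') := by
  induction l with
  | nil => simp
  | cons b l ih =>
    cases l with
    | nil => simp
    | cons c l => simp only [List.cons_append, walkCost_cons_cons] at ih ⊢; rw [ih]; ring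

lemma walkCost_append {l l' : List α} {a b : α} (ha : l.getLast? = some a)
    (hb : l'.head? = some b) : walkCost w (l ++ l') = walkCost w l + w a b + walkCost w l' := by
  obtain ⟨l, rfl⟩ := List.getLast?_eq_some_iff.mp ha
  obtain ⟨l', rfl⟩ := List.head?_eq_some_iff.mp hb
  rw [List.append_assoc, List.singleton_append, walkCost_append_cons, walkCost_cons_cons]
  ring

lemma walkCost_cons_of_head? {l : List α} {b : α} (hb : l.head? = some b) (a : α) :
    walkCost w (a :: l) = w a b + walkCost w l := by
  simpa using walkCost_append w (l := [a]) rfl hb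

lemma walkCost_concat_of_getLast? {l : List α} {b : α} (hb : l.getLast? = some b) (a : α) :
    walkCost w (l ++ [a]) = walkCost w l + w b a := by
  simpa using walkCost_append w (l' := [a]) hb rfl

lemma walkCost_reverse (hsymm : ∀ u v, w u v = w v u) : ∀ l : List α,
    walkCost w l.reverse = walkCost w l
  | [] | [_] => rfl
  | a :: b :: l => by
    rw [List.reverse_cons, walkCost_append w (a := b) (b := a) (by simp) rfl,
      walkCost_reverse hsymm (b :: l), walkCost_singleton, walkCost_cons_cons, hsymm]
    ring

lemma walkCost_map {β : Type*} (w : β → β → ℝ) (f : α → β) : ∀ l : List α,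
    walkCost w (l.map f) = walkCost (fun a b => w (f a) (f b)) l
  | [] | [_] => rfl
  | a :: b :: l => by
    simp only [List.map_cons, walkCost_cons_cons, ← walkCost_map w f (b :: l)]

lemma walkCost_le_cons (hw : ∀ u v, 0 ≤ w u v) (a : α) : ∀ l : List α,
    walkCost w l ≤ walkCost w (a :: l)
  | [] | [_] => by simp [hw]
  | b :: c :: l => by simp only [walkCost_cons_cons]; linarith [hw a b]

lemma walkCost_cons_le (hw : ∀ u v, 0 ≤ w u v) (htri : ∀ u v x, w u v ≤ w u x + w x v)
    (a b : α) : ∀ l : List α, walkCost w (a :: l) ≤ w a b + walkCost w (b :: l)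
  | [] => by simp [hw]
  | c :: l => by simp only [walkCost_cons_cons]; linarith [htri a c b]

lemma walkCost_le_of_sublist (hw : ∀ u v, 0 ≤ w u v) (htri : ∀ u v x, w u v ≤ w u x + w x v)
    {l l' : List α} (h : l.Sublist l') : walkCost w l ≤ walkCost w l' := by
  suffices walkCost w l ≤ walkCost w l' ∧ ∀ a, walkCost w (a :: l) ≤ walkCost w (a :: l') from
    this.1
  induction h with
  | slnil => simp
  | @cons l l' b _ ih =>
    refine ⟨ih.1.trans (walkCost_le_cons w hw b l'), fun a => ?_⟩
    rw [walkCost_cons_cons]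
    linarith [walkCost_cons_le w hw htri a b l, ih.2 b]
  | @cons_cons l l' b _ ih =>
    refine ⟨ih.2 b, fun a => ?_⟩
    simp only [walkCost_cons_cons]
    linarith [ih.2 b]

end WalkCost

section Cost

variable {α : Type*} [Fintype α] (w : α → α → ℝ)

lemma cost_eq_sum_edgeFinset (hsymm : ∀ u v, w u v = w v u) (G : SimpleGraph α) :
    cost w G = ∑ e ∈ G.edgeFinset, Sym2.lift ⟨w, hsymm⟩ e := by
  have hmaps : ∀ p ∈ (univ ×ˢ univ : Finset (α × α)).filter (fun p => G.Adj p.1 p.2),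
      s(p.1, p.2) ∈ G.edgeFinset := by simp
  have hfiber : ∀ e ∈ G.edgeFinset,
      ∑ p ∈ ((univ ×ˢ univ).filter fun p : α × α => G.Adj p.1 p.2).filter
        (fun p => s(p.1, p.2) = e), w p.1 p.2 = 2 * Sym2.lift ⟨w, hsymm⟩ e := by
    intro e he
    induction e with | _ a b => ?_
    have hab : G.Adj a b := by simpa using he
    have : ((univ ×ˢ univ).filter fun p : α × α => G.Adj p.1 p.2).filter
        (fun p => s(p.1, p.2) = s(a, b)) = {(a, b), (b, a)} := by
      ext ⟨u, v⟩
      simp only [mem_filter, mem_product, mem_univ, true_and, Sym2.eq_iff, mem_insert,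
        mem_singleton, Prod.mk.injEq]
      constructor
      · rintro ⟨-, h⟩; exact h
      · rintro (⟨rfl, rfl⟩ | ⟨rfl, rfl⟩)
        exacts [⟨hab, Or.inl ⟨rfl, rfl⟩⟩, ⟨hab.symm, Or.inr ⟨rfl, rfl⟩⟩]
    rw [this, sum_pair (by simp [hab.ne]), Sym2.lift_mk, hsymm b a]
    ring
  rw [cost, ← sum_product', ← sum_filter, ← sum_fiberwise_of_maps_to hmaps,
    sum_congr rfl hfiber, ← mul_sum]
  ring

lemma cost_mono (hw : ∀ u v, 0 ≤ w u v) {G H : SimpleGraph α} (h : G ≤ H) :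
    cost w G ≤ cost w H := by
  unfold cost
  gcongr with u _ v _
  split_ifs with hG hH
  exacts [le_rfl, absurd (h hG) hH, hw u v, le_rfl]

end Cost

section WalkGraph

variable {α : Type*}

noncomputable def walkGraph : List α → SimpleGraph α
  | a :: b :: l => edge a b ⊔ walkGraph (b :: l)
  | _ => ⊥

lemma walkGraph_reachable (a : α) : ∀ l : List α, ∀ x ∈ a :: l,
    (walkGraph (a :: l)).Reachable a x
  | [], x, hx => by rw [List.mem_singleton.mp hx]
  | b :: l, x, hx => by
    have hab : (walkGraph (a :: b :: l)).Reachable a b := by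
      rcases eq_or_ne a b with rfl | hne
      · rfl
      · exact Adj.reachable (by simp [walkGraph, edge_adj, hne])
    rcases List.mem_cons.mp hx with rfl | hx
    · rfl
    · exact hab.trans ((walkGraph_reachable b l x hx).mono le_sup_right)

lemma walkGraph_connected [Nonempty α] {l : List α} (hl : ∀ x, x ∈ l) :
    (walkGraph l).Connected := by
  obtain ⟨a, l, rfl⟩ :=
    List.exists_cons_of_ne_nil (List.ne_nil_of_mem (hl (Classical.arbitrary α)))
  exact (connected_iff_exists_forall_reachable _).mpr
    ⟨a, fun x => walkGraph_reachable a l x (hl x)⟩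

variable [Fintype α] (w : α → α → ℝ)

lemma cost_sup_le (hw : ∀ u v, 0 ≤ w u v) (G H : SimpleGraph α) :
    cost w (G ⊔ H) ≤ cost w G + cost w H := by
  unfold cost
  rw [← add_div, ← sum_add_distrib]
  gcongr with u _
  rw [← sum_add_distrib]
  gcongr with v _
  simp only [sup_adj]
  split_ifs <;> simp_all

lemma cost_edge_le (hsymm : ∀ u v, w u v = w v u) (hw : ∀ u v, 0 ≤ w u v) (a b : α) :
    cost w (edge a b) ≤ w a b := by
  rw [cost_eq_sum_edgeFinset w hsymm]
  calc _ ≤ ∑ e ∈ {s(a, b)}, Sym2.lift ⟨w, hsymm⟩ e := by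
        refine sum_le_sum_of_subset_of_nonneg (fun e he => ?_) fun e _ _ => ?_
        · simp_all [edgeSet_edge]
        · induction e with | _ u v => exact hw u v
    _ = w a b := by simp

lemma cost_walkGraph_le (hsymm : ∀ u v, w u v = w v u) (hw : ∀ u v, 0 ≤ w u v) :
    ∀ l : List α, cost w (walkGraph l) ≤ walkCost w l
  | [] | [_] => by simp [walkGraph, cost]
  | a :: b :: l => by
    rw [walkGraph, walkCost_cons_cons]
    linarith [cost_sup_le w hw (edge a b) (walkGraph (b :: l)),
      cost_edge_le w hsymm hw a b, cost_walkGraph_le hsymm hw (b :: l)]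

end WalkGraph

lemma IsMST.cost_le_walkCost {α : Type*} [Fintype α] {w : α → α → ℝ} {G : SimpleGraph α}
    (hG : IsMST w G) (hsymm : ∀ u v, w u v = w v u) (hw : ∀ u v, 0 ≤ w u v) {l : List α}
    (hl : ∀ x, x ∈ l) : cost w G ≤ walkCost w l := by
  have : Nonempty α := hG.1.connected.nonempty
  obtain ⟨T, hTle, hT⟩ := (walkGraph_connected hl).exists_isTree_le
  calc cost w G ≤ cost w T := hG.2 T hT
    _ ≤ cost w (walkGraph l) := cost_mono w hw hTle
    _ ≤ walkCost w l := cost_walkGraph_le w hsymm hw l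

lemma IsSubMST.subCost_le_walkCost {V : Type*} [Fintype V] {w : V → V → ℝ} {S : Set V}
    {G : SimpleGraph S} (hG : IsSubMST w S G) (hsymm : ∀ u v, w u v = w v u)
    (hw : ∀ u v, 0 ≤ w u v) (htri : ∀ u v x, w u v ≤ w u x + w x v) {l : List V}
    (hl : ∀ x ∈ S, x ∈ l) : subCost w S G ≤ walkCost w l := by
  let lS : List S := (l.filter (· ∈ S)).pmap Subtype.mk fun x hx =>
    of_decide_eq_true (List.mem_filter.1 hx).2
  have hval : lS.map Subtype.val = l.filter (· ∈ S) := by simp [lS, List.map_pmap]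
  calc subCost w S G ≤ walkCost (fun u v : S => w u v) lS :=
        hG.cost_le_walkCost (fun u v => hsymm u v) (fun u v => hw u v)
          fun x => List.mem_pmap.mpr
            ⟨x, List.mem_filter.mpr ⟨hl x x.2, decide_eq_true x.2⟩, rfl⟩
    _ = walkCost w (l.filter (· ∈ S)) := by rw [← hval, walkCost_map]
    _ ≤ walkCost w l := walkCost_le_of_sublist w hw htri List.filter_sublist

lemma exists_detour {α : Type*} (w : α → α → ℝ) {l : List α} {r s y : α}
    (hr : l.head? = some r) (hs : l.getLast? = some s) (hy : y ∈ l) (x : α) :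
    ∃ l' : List α, l'.head? = some r ∧ l'.getLast? = some s ∧ x ∈ l' ∧ (∀ z ∈ l, z ∈ l') ∧
      walkCost w l' = walkCost w l + w y x + w x y := by
  obtain ⟨A, B, rfl⟩ := List.append_of_mem hy
  refine ⟨A ++ y :: x :: y :: B, ?_, ?_, by simp, fun z hz => ?_, ?_⟩
  · cases A <;> simpa using hr
  · rw [← hs, List.getLast?_append, List.getLast?_append]
    cases B <;> simp
  · simp only [List.mem_append, List.mem_cons] at hz ⊢
    tauto
  · rw [walkCost_append_cons w A y (x :: y :: B), walkCost_append_cons w A y B]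
    simp only [walkCost_cons_cons]
    ring

section EdgeList

variable {α : Type*} (w : α → α → ℝ)

def edgeSum (E : List (α × α)) : ℝ := (E.map fun p => w p.1 p.2).sum

def edgeMax (E : List (α × α)) : ℝ := (E.map fun p => w p.1 p.2).foldr max 0

@[simp] lemma edgeSum_nil : edgeSum w [] = 0 := rfl

@[simp] lemma edgeSum_cons (p : α × α) (E : List (α × α)) :
    edgeSum w (p :: E) = w p.1 p.2 + edgeSum w E := List.sum_cons

lemma edgeSum_append (E E' : List (α × α)) :
    edgeSum w (E ++ E') = edgeSum w E + edgeSum w E' := by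
  simp [edgeSum]

lemma edgeSum_perm {E E' : List (α × α)} (h : E.Perm E') : edgeSum w E = edgeSum w E' :=
  (h.map _).sum_eq

lemma le_edgeMax {E : List (α × α)} {p : α × α} (hp : p ∈ E) : w p.1 p.2 ≤ edgeMax w E := by
  induction E with
  | nil => simp at hp
  | cons q E ih =>
    rcases List.mem_cons.mp hp with rfl | hp
    exacts [le_max_left _ _, (ih hp).trans (le_max_right _ _)]

lemma edgeMax_nonneg (E : List (α × α)) : 0 ≤ edgeMax w E := by
  induction E with
  | nil => exact le_rfl
  | cons q E ih => exact ih.trans (le_max_right _ _)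

lemma edgeMax_eq_zero_or_exists (E : List (α × α)) :
    edgeMax w E = 0 ∨ ∃ p ∈ E, edgeMax w E = w p.1 p.2 := by
  induction E with
  | nil => exact Or.inl rfl
  | cons q E ih =>
    change max (w q.1 q.2) (edgeMax w E) = 0 ∨
      ∃ p ∈ q :: E, max (w q.1 q.2) (edgeMax w E) = _
    rcases max_choice (w q.1 q.2) (edgeMax w E) with h | h <;> rw [h]
    · exact Or.inr ⟨q, List.mem_cons_self, rfl⟩
    · exact ih.imp_right fun ⟨p, hp, hpE⟩ => ⟨p, List.mem_cons_of_mem q hp, hpE⟩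

end EdgeList

section LeafTree

variable {α : Type*} [DecidableEq α]

-- Trees grown from one vertex by attaching leaves: cutting at an edge (`LeafTree.split`) and
-- walking around (`LeafTree.exists_walk`) then become structural inductions.
inductive LeafTree : Finset α → List (α × α) → Prop
  | single (v : α) : LeafTree {v} []
  | leaf {S : Finset α} {E : List (α × α)} {x y : α} (hx : x ∉ S) (hy : y ∈ S) :
      LeafTree S E → LeafTree (insert x S) ((x, y) :: E)

namespace LeafTree

variable {S : Finset α} {E : List (α × α)}

lemma fst_mem_and_snd_mem (h : LeafTree S E) {p : α × α} (hp : p ∈ E) : p.1 ∈ S ∧ p.2 ∈ S := by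
  induction h with
  | single v => simp at hp
  | leaf hx hy _ ih =>
    rcases List.mem_cons.mp hp with rfl | hp
    · exact ⟨mem_insert_self _ _, mem_insert_of_mem hy⟩
    · exact (ih hp).imp (mem_insert_of_mem ·) (mem_insert_of_mem ·)

lemma nodup_map_mk (h : LeafTree S E) : (E.map fun p => s(p.1, p.2)).Nodup := by
  induction h with
  | single v => simp
  | @leaf S E x y hx hy h ih =>
    refine List.nodup_cons.mpr ⟨fun hmem => ?_, ih⟩
    obtain ⟨p, hp, hpxy⟩ := List.mem_map.mp hmem
    rcases Sym2.eq_iff.mp hpxy with ⟨rfl, -⟩ | ⟨-, rfl⟩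
    exacts [hx (h.fst_mem_and_snd_mem hp).1, hx (h.fst_mem_and_snd_mem hp).2]

lemma card_eq (h : LeafTree S E) : S.card = E.length + 1 := by
  induction h with
  | single v => simp
  | leaf hx _ _ ih => rw [card_insert_of_notMem hx, ih, List.length_cons]

lemma reachable (h : LeafTree S E) {G : SimpleGraph α} (hG : ∀ p ∈ E, G.Adj p.1 p.2)
    {u v : α} (hu : u ∈ S) (hv : v ∈ S) : G.Reachable u v := by
  induction h generalizing u v with
  | single v => rw [mem_singleton.mp hu, mem_singleton.mp hv]
  | @leaf S E x y hx hy h ih =>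
    have hxy : G.Adj x y := hG (x, y) List.mem_cons_self
    have ih' := @ih fun p hp => hG p (List.mem_cons_of_mem _ hp)
    have hto : ∀ z ∈ insert x S, G.Reachable y z := by
      rw [forall_mem_insert]
      exact ⟨hxy.symm.reachable, fun z hz => ih' hy hz⟩
    exact (hto u hu).symm.trans (hto v hv)

lemma split (h : LeafTree S E) {a b : α} (hab : (a, b) ∈ E) :
    ∃ S₁ E₁ S₂ E₂, LeafTree S₁ E₁ ∧ LeafTree S₂ E₂ ∧ a ∈ S₁ ∧ b ∈ S₂ ∧ S₁ ∪ S₂ = S ∧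
      E.Perm ((a, b) :: (E₁ ++ E₂)) := by
  induction h with
  | single v => simp at hab
  | @leaf S E x y hx hy h ih =>
    rcases List.mem_cons.mp hab with hxy | hab
    · obtain ⟨rfl, rfl⟩ := Prod.mk.inj hxy
      exact ⟨{a}, [], S, E, single a, h, mem_singleton_self a, hy, (insert_eq a S).symm,
        by simp⟩
    obtain ⟨S₁, E₁, S₂, E₂, h₁, h₂, ha, hb, hS, hE⟩ := ih hab
    have hperm : ((x, y) :: E).Perm ((a, b) :: ((x, y) :: E₁ ++ E₂)) :=
      (hE.cons _).trans (List.Perm.swap _ _ _)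
    rw [← hS, mem_union] at hy
    rw [← hS, mem_union, not_or] at hx
    rcases hy with hy | hy
    · exact ⟨_, _, S₂, E₂, h₁.leaf hx.1 hy, h₂, mem_insert_of_mem ha, hb,
        by rw [insert_union, hS], hperm⟩
    · refine ⟨S₁, E₁, _, _, h₁, h₂.leaf hx.2 hy, ha, mem_insert_of_mem hb,
        by rw [union_insert, hS], hperm.trans ?_⟩
      exact (List.perm_middle.symm.cons _)

variable {w : α → α → ℝ} (hsymm : ∀ u v, w u v = w v u) (hw : ∀ u v, 0 ≤ w u v)
include hsymm hw

lemma exists_walk (h : LeafTree S E) {r s : α} (hr : r ∈ S) (hs : s ∈ S) :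
    ∃ l : List α, l.head? = some r ∧ l.getLast? = some s ∧ (∀ z ∈ S, z ∈ l) ∧
      walkCost w l ≤ 2 * edgeSum w E := by
  induction h generalizing r s with
  | single v =>
    rw [mem_singleton.mp hr, mem_singleton.mp hs]
    exact ⟨[v], rfl, rfl, by simp, by simp⟩
  | @leaf S E x y hx hy h ih =>
    have hxy := hw x y
    rw [edgeSum_cons]
    dsimp only
    have cover : ∀ {l l' : List α}, x ∈ l' → (∀ z ∈ l, z ∈ l') → (∀ z ∈ S, z ∈ l) →
        ∀ z ∈ insert x S, z ∈ l' := fun hx' hll' hl =>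
      (forall_mem_insert _ _ _).mpr ⟨hx', fun z hz => hll' z (hl z hz)⟩
    rcases eq_or_ne r x with rfl | hrx
    · rcases eq_or_ne s r with rfl | hsr
      · obtain ⟨l, hl₁, hl₂, hlS, hl⟩ := ih hy hy
        refine ⟨s :: (l ++ [s]), rfl, by simp [List.getLast?_cons],
          cover (by simp) (by simp +contextual) hlS, ?_⟩
        rw [walkCost_cons_of_head? w (b := y) (by simp [hl₁]),
          walkCost_concat_of_getLast? w hl₂, hsymm y]
        linarith
      · obtain ⟨l, hl₁, hl₂, hlS, hl⟩ := ih hy ((mem_insert.mp hs).resolve_left hsr)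
        refine ⟨r :: l, rfl, by simp [List.getLast?_cons, hl₂],
          cover (by simp) (by simp +contextual) hlS, ?_⟩
        rw [walkCost_cons_of_head? w hl₁]
        linarith
    have hrS : r ∈ S := (mem_insert.mp hr).resolve_left hrx
    rcases eq_or_ne s x with rfl | hsx
    · obtain ⟨l, hl₁, hl₂, hlS, hl⟩ := ih hrS hy
      refine ⟨l ++ [s], by simp [hl₁], by simp, cover (by simp) (by simp +contextual) hlS, ?_⟩
      rw [walkCost_concat_of_getLast? w hl₂, hsymm]
      linarith
    · obtain ⟨l, hl₁, hl₂, hlS, hl⟩ := ih hrS ((mem_insert.mp hs).resolve_left hsx)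
      obtain ⟨l', hl'₁, hl'₂, hxl', hll', hl'⟩ := exists_detour w hl₁ hl₂ (hlS y hy) x
      refine ⟨l', hl'₁, hl'₂, cover hxl' hll' hlS, ?_⟩
      rw [hl', hsymm y]
      linarith

lemma exists_walk_sub_edgeMax (h : LeafTree S E) {r : α} (hr : r ∈ S) :
    ∃ l : List α, l.head? = some r ∧ (∀ z ∈ S, z ∈ l) ∧
      walkCost w l ≤ 2 * edgeSum w E - edgeMax w E := by
  rcases edgeMax_eq_zero_or_exists w E with hmax | ⟨⟨a, b⟩, hab, hmax⟩
  · obtain ⟨l, hl₁, -, hlS, hl⟩ := h.exists_walk hsymm hw hr hr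
    exact ⟨l, hl₁, hlS, by linarith⟩
  obtain ⟨S₁, E₁, S₂, E₂, h₁, h₂, ha, hb, rfl, hE⟩ := h.split hab
  rw [hmax, edgeSum_perm w hE, edgeSum_cons, edgeSum_append]
  dsimp only
  rcases mem_union.mp hr with hr | hr
  · obtain ⟨l₁, hl₁₁, hl₁₂, hl₁S, hl₁⟩ := h₁.exists_walk hsymm hw hr ha
    obtain ⟨l₂, hl₂₁, -, hl₂S, hl₂⟩ := h₂.exists_walk hsymm hw hb hb
    refine ⟨l₁ ++ l₂, by simp [hl₁₁], forall_mem_union.mpr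
      ⟨fun z hz => List.mem_append_left _ (hl₁S z hz),
        fun z hz => List.mem_append_right _ (hl₂S z hz)⟩, ?_⟩
    rw [walkCost_append w hl₁₂ hl₂₁]
    linarith
  · obtain ⟨l₂, hl₂₁, hl₂₂, hl₂S, hl₂⟩ := h₂.exists_walk hsymm hw hr hb
    obtain ⟨l₁, hl₁₁, -, hl₁S, hl₁⟩ := h₁.exists_walk hsymm hw ha ha
    refine ⟨l₂ ++ l₁, by simp [hl₂₁], forall_mem_union.mpr
      ⟨fun z hz => List.mem_append_right _ (hl₁S z hz),
        fun z hz => List.mem_append_left _ (hl₂S z hz)⟩, ?_⟩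
    rw [walkCost_append w hl₂₂ hl₁₁, hsymm b]
    linarith

end LeafTree

end LeafTree

section SpanningLeafTree

variable {α : Type*} [Fintype α] [DecidableEq α] {G : SimpleGraph α}

lemma LeafTree.exists_extension (hG : G.Connected) {C : Finset α} {E : List (α × α)}
    (h : LeafTree C E) (hE : ∀ p ∈ E, G.Adj p.1 p.2) :
    ∃ F, LeafTree univ (F ++ E) ∧ ∀ p ∈ F ++ E, G.Adj p.1 p.2 := by
  by_cases hC : C = univ
  · exact ⟨[], hC ▸ h, hE⟩
  obtain ⟨v, hv⟩ : ∃ v, v ∉ C := by simpa [eq_univ_iff_forall] using hC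
  obtain ⟨u, hu⟩ : C.Nonempty := card_pos.mp (by rw [h.card_eq]; omega)
  obtain ⟨d, -, hd₁, hd₂⟩ := (hG.preconnected u v).some.exists_boundary_dart (↑C) hu hv
  obtain ⟨F, hF, hFG⟩ := (h.leaf hd₂ hd₁).exists_extension hG
    (List.forall_mem_cons.mpr ⟨d.adj.symm, hE⟩)
  exact ⟨F ++ [(d.snd, d.fst)], by simpa using hF, by simpa using hFG⟩
termination_by (univ \ C).card
decreasing_by
  rw [card_univ_sdiff, card_univ_sdiff, card_insert_of_notMem hd₂]
  have := card_lt_univ_of_notMem hv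
  omega

lemma LeafTree.toFinset_map_mk_eq_edgeFinset (hG : G.IsTree) {E : List (α × α)}
    (h : LeafTree univ E) (hE : ∀ p ∈ E, G.Adj p.1 p.2) :
    (E.map fun p => s(p.1, p.2)).toFinset = G.edgeFinset := by
  refine eq_of_subset_of_card_le (fun e he => ?_) ?_
  · obtain ⟨p, hp, rfl⟩ := List.mem_map.mp (List.mem_toFinset.mp he)
    simpa using hE p hp
  · rw [List.toFinset_card_of_nodup h.nodup_map_mk, List.length_map]
    have := hG.card_edgeFinset
    have := h.card_eq
    rw [card_univ] at this
    omega

lemma SimpleGraph.IsTree.exists_leafTree (hG : G.IsTree) {a b : α} (hab : G.Adj a b) :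
    ∃ E, LeafTree univ E ∧ (a, b) ∈ E ∧
      (E.map fun p => s(p.1, p.2)).toFinset = G.edgeFinset := by
  have h₀ : LeafTree {a, b} [(a, b)] :=
    (LeafTree.single b).leaf (by simpa using hab.ne) (mem_singleton_self b)
  obtain ⟨F, hF, hFG⟩ := h₀.exists_extension hG.connected (by simpa using hab)
  exact ⟨F ++ [(a, b)], hF, by simp, hF.toFinset_map_mk_eq_edgeFinset hG hFG⟩

lemma cost_eq_edgeSum (w : α → α → ℝ) (hsymm : ∀ u v, w u v = w v u) {E : List (α × α)}
    (hnd : (E.map fun p => s(p.1, p.2)).Nodup)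
    (hE : (E.map fun p => s(p.1, p.2)).toFinset = G.edgeFinset) : cost w G = edgeSum w E := by
  rw [cost_eq_sum_edgeFinset w hsymm, ← hE, List.sum_toFinset _ hnd, List.map_map]
  rfl

lemma deleteEdges_adj_iff_of_perm {E E' : List (α × α)} {a b : α}
    (hnd : (E.map fun p => s(p.1, p.2)).Nodup)
    (hE : (E.map fun p => s(p.1, p.2)).toFinset = G.edgeFinset) (hperm : E.Perm ((a, b) :: E'))
    {u v : α} : (G.deleteEdges {s(a, b)}).Adj u v ↔ s(u, v) ∈ E'.map fun p => s(p.1, p.2) := by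
  have hnd' := ((hperm.map _).nodup_iff.mp hnd)
  rw [List.map_cons, List.nodup_cons] at hnd'
  rw [deleteEdges_adj, ← mem_edgeSet, ← mem_edgeFinset, ← hE,
    List.mem_toFinset, (hperm.map _).mem_iff, List.map_cons, List.mem_cons, Set.mem_singleton_iff]
  constructor
  · rintro ⟨h | h, hne⟩
    exacts [absurd h hne, h]
  · exact fun h => ⟨Or.inr h, fun heq => hnd'.1 (heq ▸ h)⟩

end SpanningLeafTree

lemma maxEdgeWeight_le {β : Type*} (w : β → β → ℝ) (G : SimpleGraph β) {B : ℝ} (hB : 0 ≤ B)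
    (h : ∀ u v, G.Adj u v → w u v ≤ B) : maxEdgeWeight w G ≤ B :=
  Real.iSup_le (fun u => Real.iSup_le (fun v => Real.iSup_le (h u v) hB) hB) hB

lemma le_edgeMax_of_mem_map {α : Type*} (w : α → α → ℝ) (hsymm : ∀ u v, w u v = w v u)
    {E : List (α × α)} {u v : α} (h : s(u, v) ∈ E.map fun p => s(p.1, p.2)) :
    w u v ≤ edgeMax w E := by
  obtain ⟨p, hp, hpuv⟩ := List.mem_map.mp h
  have : w p.1 p.2 = w u v := by simpa using congrArg (Sym2.lift ⟨w, hsymm⟩) hpuv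
  exact this ▸ le_edgeMax w hp

noncomputable def componentMaxW {V : Type*} (w : V → V → ℝ) (G : SimpleGraph V) (v : V) : ℝ :=
  subMaxW w {x | G.Reachable v x} (G.induce {x | G.Reachable v x})

section Component

variable {α : Type*} {G : SimpleGraph α} {E₁ E₂ : List (α × α)} {a b : α}

lemma mem_map_of_adj_of_reachable
    (hG : ∀ u v, G.Adj u v → s(u, v) ∈ (E₁ ++ E₂).map fun p => s(p.1, p.2))
    (hE₂ : ∀ p ∈ E₂, G.Reachable b p.1) (hab : ¬ G.Reachable a b) {u v : α}
    (hu : G.Reachable a u) (huv : G.Adj u v) : s(u, v) ∈ E₁.map fun p => s(p.1, p.2) := by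
  rcases List.mem_append.mp (List.map_append ▸ hG u v huv) with h | h
  · exact h
  obtain ⟨p, hp, hpuv⟩ := List.mem_map.mp h
  have hbu : G.Reachable b u := by
    rcases Sym2.eq_iff.mp hpuv with ⟨h₁, -⟩ | ⟨h₁, -⟩
    · exact h₁ ▸ hE₂ p hp
    · exact (h₁ ▸ hE₂ p hp).trans huv.symm.reachable
  exact absurd (hu.trans hbu.symm) hab

lemma componentMaxW_le_edgeMax (w : α → α → ℝ) (hsymm : ∀ u v, w u v = w v u)
    (hG : ∀ u v, G.Adj u v → s(u, v) ∈ (E₁ ++ E₂).map fun p => s(p.1, p.2))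
    (hE₂ : ∀ p ∈ E₂, G.Reachable b p.1) (hab : ¬ G.Reachable a b) :
    componentMaxW w G a ≤ edgeMax w E₁ :=
  maxEdgeWeight_le _ _ (edgeMax_nonneg w E₁) fun u _ huv =>
    le_edgeMax_of_mem_map w hsymm (mem_map_of_adj_of_reachable hG hE₂ hab u.2 huv)

end Component

lemma SimpleGraph.IsTree.exists_walk_cost_le {V : Type*} [Fintype V] (w : V → V → ℝ)
    (hsymm : ∀ u v, w u v = w v u) (hw : ∀ u v, 0 ≤ w u v) {T : SimpleGraph V}
    (hT : T.IsTree) {a b : V} (hab : T.Adj a b) :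
    ∃ l : List V, (∀ x, x ∈ l) ∧ walkCost w l ≤ 2 * cost w T -
      (componentMaxW w (T.deleteEdges {s(a, b)}) a + w a b +
        componentMaxW w (T.deleteEdges {s(a, b)}) b) := by
  set G := T.deleteEdges {s(a, b)}
  obtain ⟨E, hE, habE, hET⟩ := hT.exists_leafTree hab
  obtain ⟨S₁, E₁, S₂, E₂, h₁, h₂, ha, hb, hS, hperm⟩ := hE.split habE
  have hG : ∀ u v, G.Adj u v ↔ s(u, v) ∈ (E₁ ++ E₂).map fun p => s(p.1, p.2) := fun u v =>
    deleteEdges_adj_iff_of_perm hE.nodup_map_mk hET hperm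
  have hreach : ∀ {S E c}, LeafTree S E → (∀ p ∈ E, p ∈ E₁ ++ E₂) → c ∈ S →
      ∀ p ∈ E, G.Reachable c p.1 := fun h hsub hc p hp =>
    h.reachable (fun q hq => (hG _ _).mpr (List.mem_map_of_mem (hsub q hq))) hc
      (h.fst_mem_and_snd_mem hp).1
  have hab' : ¬ G.Reachable a b :=
    isBridge_iff.mp (isAcyclic_iff_forall_adj_isBridge.mp hT.isAcyclic hab)
  have hwa := componentMaxW_le_edgeMax w hsymm (fun u v huv => (hG u v).mp huv)
    (hreach h₂ (fun _ => List.mem_append_right E₁) hb) hab'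
  have hwb := componentMaxW_le_edgeMax (E₂ := E₁) w hsymm
    (fun u v huv => by simpa [or_comm] using (hG u v).mp huv)
    (hreach h₁ (fun _ => List.mem_append_left E₂) ha) (fun h => hab' h.symm)
  obtain ⟨l₁, hl₁, hl₁S, hl₁c⟩ := h₁.exists_walk_sub_edgeMax hsymm hw ha
  obtain ⟨l₂, hl₂, hl₂S, hl₂c⟩ := h₂.exists_walk_sub_edgeMax hsymm hw hb
  have hcost : cost w T = w a b + edgeSum w E₁ + edgeSum w E₂ := by
    rw [cost_eq_edgeSum w hsymm hE.nodup_map_mk hET, edgeSum_perm w hperm, edgeSum_cons,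
      edgeSum_append, add_assoc]
  refine ⟨l₁.reverse ++ l₂, fun x => ?_, ?_⟩
  · rcases mem_union.mp (hS ▸ mem_univ x) with hx | hx
    exacts [List.mem_append_left _ (List.mem_reverse.mpr (hl₁S x hx)),
      List.mem_append_right _ (hl₂S x hx)]
  · rw [walkCost_append w (by simpa using hl₁) hl₂, walkCost_reverse w hsymm]
    linarith

theorem stmt_3_general {V : Type*} [Fintype V] (w : V → V → ℝ)
    (hw_symm : ∀ u v, w u v = w v u)
    (hw_nonneg : ∀ u v, 0 ≤ w u v)
    (hw_tri : ∀ u v x, w u v ≤ w u x + w x v)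
    (T : SimpleGraph V) (hT : IsMST w T)
    (vL vR : V) (hadj : T.Adj vL vR)
    (VL VR : Set V)
    (hVL : VL = {x | (T.deleteEdges {s(vL, vR)}).Reachable vL x})
    (hVR : VR = {x | (T.deleteEdges {s(vL, vR)}).Reachable vR x})
    (Vb Vr : Set V)
    (Tb : SimpleGraph Vb) (hTb : IsSubMST w Vb Tb)
    (Tr : SimpleGraph Vr) (hTr : IsSubMST w Vr Tr) :
    max (subCost w Vb Tb) (subCost w Vr Tr) ≤
      2 * cost w T - (subMaxW w VL ((T.deleteEdges {s(vL, vR)}).induce VL) + w vL vR + subMaxW w VR ((T.deleteEdges {s(vL, vR)}).induce VR)) := by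
  subst hVL hVR
  obtain ⟨l, hl, hlw⟩ := hT.1.exists_walk_cost_le w hw_symm hw_nonneg hadj
  exact max_le ((hTb.subCost_le_walkCost hw_symm hw_nonneg hw_tri fun x _ => hl x).trans hlw)
    ((hTr.subCost_le_walkCost hw_symm hw_nonneg hw_tri fun x _ => hl x).trans hlw)

theorem stmt_3 {V : Type*} [Fintype V] (w : V → V → ℝ)
    (hw_self : ∀ v, w v v = 0)
    (hw_symm : ∀ u v, w u v = w v u)
    (hw_nonneg : ∀ u v, 0 ≤ w u v)
    (hw_tri : ∀ u v x, w u v ≤ w u x + w x v)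
    (T : SimpleGraph V) (hT : IsMST w T)
    (vL vR : V) (hadj : T.Adj vL vR)
    (hmax : ∀ a b, T.Adj a b → w a b ≤ w vL vR)
    (VL VR : Set V)
    (hVL : VL = {x | (T.deleteEdges {s(vL, vR)}).Reachable vL x})
    (hVR : VR = {x | (T.deleteEdges {s(vL, vR)}).Reachable vR x})
    (Vb Vr : Set V) (hunion : Vb ∪ Vr = Set.univ) (hdisj : Disjoint Vb Vr)
    (hbne : Vb.Nonempty) (hrne : Vr.Nonempty)
    (Tb : SimpleGraph Vb) (hTb : IsSubMST w Vb Tb)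
    (Tr : SimpleGraph Vr) (hTr : IsSubMST w Vr Tr) :
    max (subCost w Vb Tb) (subCost w Vr Tr) ≤
      2 * cost w T - (subMaxW w VL ((T.deleteEdges {s(vL, vR)}).induce VL) + w vL vR + subMaxW w VR ((T.deleteEdges {s(vL, vR)}).induce VR)) :=
  stmt_3_general w hw_symm hw_nonneg hw_tri T hT vL vR hadj VL VR hVL hVR Vb Vr Tb hTb Tr hTr
end

section
/- Suppose exactly one of T_L, T_R contains a pair. Then for every feasible 2-MST solution, with blue tree S_b and red tree S_r, the edge set of S_b ∪ S_r contains a cross-edge of weight at least w_×. -/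
open scoped Classical

/-!
Deleting the maximum edge `e_×` of the MST `T` splits `V` into `V_L` and `V_R`, and by the cut
property every edge between them weighs at least `w_×`: otherwise exchanging it for `e_×` would
give a cheaper spanning tree of `V`. If a pair lies inside `V_L`, both colours occur in `V_L`,
and the colour of `v_R ∉ V_L` occurs outside it, so the tree of that colour must cross the cut
(symmetrically with `v_L` if the pair lies in `V_R`).
-/

open SimpleGraph

section Cost

variable {α : Type*} [Fintype α] {w : α → α → ℝ}

lemma cost_sup_of_disjoint {G H : SimpleGraph α} (hGH : Disjoint G H) :
    cost w (G ⊔ H) = cost w G + cost w H := by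
  have hinf : ∀ u v, ¬ (G.Adj u v ∧ H.Adj u v) := fun u v h => by
    simpa [disjoint_iff.mp hGH] using (show (G ⊓ H).Adj u v from h)
  unfold cost
  rw [← add_div, ← Finset.sum_add_distrib]
  congr 1
  refine Finset.sum_congr rfl fun u _ => ?_
  rw [← Finset.sum_add_distrib]
  refine Finset.sum_congr rfl fun v _ => ?_
  have := hinf u v
  by_cases hG : G.Adj u v <;> by_cases hH : H.Adj u v <;> simp_all

lemma cost_edge (hw : ∀ u v, w u v = w v u) {a b : α} (hab : a ≠ b) :
    cost w (edge a b) = w a b :=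
  calc cost w (edge a b) = (∑ u : α, ∑ v : α,
        ((if u = a ∧ v = b then w u v else 0) + (if u = b ∧ v = a then w u v else 0))) / 2 := by
        unfold cost
        congr 1
        refine Finset.sum_congr rfl fun u _ => Finset.sum_congr rfl fun v _ => ?_
        split_ifs <;> simp_all [edge_adj]
    _ = w a b := by
        simp [Finset.sum_add_distrib, ite_and]
        rw [hw b a]; ring

lemma cost_sup_edge (hw : ∀ u v, w u v = w v u) {G : SimpleGraph α} {a b : α} (hab : a ≠ b)
    (hnadj : ¬ G.Adj a b) : cost w (G ⊔ edge a b) = cost w G + w a b := by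
  rw [cost_sup_of_disjoint ((disjoint_edge G).mpr hnadj), cost_edge hw hab]

lemma cost_eq_cost_deleteEdges_add (hw : ∀ u v, w u v = w v u) {G : SimpleGraph α} {a b : α}
    (hab : G.Adj a b) : cost w G = cost w (G.deleteEdges {s(a, b)}) + w a b := by
  have hG : G.deleteEdges {s(a, b)} ⊔ edge a b = G :=
    sdiff_sup_cancel ((edge_le_iff G).mpr (Or.inr hab))
  rw [← cost_sup_edge hw hab.ne (by simp), hG]

end Cost

namespace SimpleGraph

variable {V : Type*} {G : SimpleGraph V}

lemma Preconnected.exists_adj_mem_notMem (hG : G.Preconnected) {X : Set V} {x y : V}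
    (hx : x ∈ X) (hy : y ∉ X) : ∃ u v, G.Adj u v ∧ u ∈ X ∧ v ∉ X := by
  obtain ⟨d, -, hd⟩ := (hG x y).some.exists_boundary_dart X hx hy
  exact ⟨d.fst, d.snd, d.adj, hd⟩

lemma Preconnected.reachable_deleteEdges_or (hG : G.Preconnected) (a b x : V) :
    (G.deleteEdges {s(a, b)}).Reachable a x ∨ (G.deleteEdges {s(a, b)}).Reachable b x := by
  set H := G.deleteEdges {s(a, b)}
  by_contra hx
  obtain ⟨u, v, huv, hu, hv⟩ :=
    hG.exists_adj_mem_notMem (X := {y | H.Reachable a y ∨ H.Reachable b y}) (Or.inl .rfl) hx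
  by_cases he : s(u, v) = s(a, b)
  · rcases Sym2.eq_iff.mp he with ⟨-, rfl⟩ | ⟨-, rfl⟩
    exacts [hv (Or.inr .rfl), hv (Or.inl .rfl)]
  · have hH : H.Adj u v := by simp [H, huv, he]
    exact hv (hu.imp (·.trans hH.reachable) (·.trans hH.reachable))

lemma IsTree.not_reachable_deleteEdges (hT : G.IsTree) {a b : V} (hab : G.Adj a b) :
    ¬ (G.deleteEdges {s(a, b)}).Reachable a b :=
  isAcyclic_iff_forall_adj_isBridge.mp hT.isAcyclic hab

lemma IsTree.deleteEdges_sup_edge (hT : G.IsTree) {a b u v : V}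
    (hu : (G.deleteEdges {s(a, b)}).Reachable a u)
    (hv : ¬ (G.deleteEdges {s(a, b)}).Reachable a v) :
    (G.deleteEdges {s(a, b)} ⊔ edge u v).IsTree := by
  set H := G.deleteEdges {s(a, b)}
  have hcover := hT.connected.preconnected.reachable_deleteEdges_or a b
  have hle : H ≤ H ⊔ edge u v := le_sup_left
  have huv : (H ⊔ edge u v).Adj u v := by
    simp [edge_adj, show u ≠ v by rintro rfl; exact hv hu]
  have hbv : H.Reachable b v := (hcover v).resolve_left hv
  have hreach : ∀ x, (H ⊔ edge u v).Reachable a x := fun x =>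
    (hcover x).elim (·.mono hle) fun hbx =>
      ((hu.mono hle).trans huv.reachable).trans ((hbv.symm.trans hbx).mono hle)
  refine ⟨(connected_iff_exists_forall_reachable _).mpr ⟨a, hreach⟩, ?_⟩
  exact (hT.isAcyclic.anti (deleteEdges_le _)).sup_edge_of_not_reachable fun h => hv (hu.trans h)

end SimpleGraph

/-- The cut property of minimum spanning trees. -/
theorem IsMST.weight_le_of_reachable_of_not_reachable {V : Type*} [Fintype V] {w : V → V → ℝ}
    (hw : ∀ u v, w u v = w v u) {T : SimpleGraph V} (hT : IsMST w T) {a b u v : V}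
    (hab : T.Adj a b) (hu : (T.deleteEdges {s(a, b)}).Reachable a u)
    (hv : ¬ (T.deleteEdges {s(a, b)}).Reachable a v) : w a b ≤ w u v := by
  have huv : u ≠ v := by rintro rfl; exact hv hu
  have hnadj : ¬ (T.deleteEdges {s(a, b)}).Adj u v := fun h => hv (hu.trans h.reachable)
  have hcost := hT.2 _ (hT.1.deleteEdges_sup_edge hu hv)
  rw [cost_sup_edge hw huv hnadj, cost_eq_cost_deleteEdges_add hw hab] at hcost
  linarith

lemma exists_adj_mem_notMem_of_pair_mem {V : Type*} {B Y : Set V} {x y z : V}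
    (hxy : x ∈ B ↔ y ∉ B) (hx : x ∈ Y) (hy : y ∈ Y) (hz : z ∉ Y)
    {Sb : SimpleGraph B} {Sr : SimpleGraph (Bᶜ : Set V)}
    (hSb : Sb.Preconnected) (hSr : Sr.Preconnected) :
    (∃ u v : B, Sb.Adj u v ∧ u.1 ∈ Y ∧ v.1 ∉ Y) ∨
      (∃ u v : (Bᶜ : Set V), Sr.Adj u v ∧ u.1 ∈ Y ∧ v.1 ∉ Y) := by
  by_cases hzB : z ∈ B
  · obtain ⟨c, hcB, hcY⟩ : ∃ c ∈ B, c ∈ Y := by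
      by_cases hxB : x ∈ B
      exacts [⟨x, hxB, hx⟩, ⟨y, by tauto, hy⟩]
    exact Or.inl (hSb.exists_adj_mem_notMem (X := Subtype.val ⁻¹' Y) (x := ⟨c, hcB⟩)
      (y := ⟨z, hzB⟩) hcY hz)
  · obtain ⟨c, hcB, hcY⟩ : ∃ c ∈ (Bᶜ : Set V), c ∈ Y := by
      by_cases hxB : x ∈ B
      exacts [⟨y, hxy.mp hxB, hy⟩, ⟨x, hxB, hx⟩]
    exact Or.inr (hSr.exists_adj_mem_notMem (X := Subtype.val ⁻¹' Y) (x := ⟨c, hcB⟩)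
      (y := ⟨z, hzB⟩) hcY hz)

theorem stmt_7_general {V : Type*} [Fintype V]
    {n : ℕ}
    (p q : Fin n → V)
    (w : V → V → ℝ)
    (hw_symm : ∀ u v, w u v = w v u)
    (T : SimpleGraph V) (hT : IsMST w T)
    (vL vR : V) (hadj : T.Adj vL vR)
    (VL VR : Set V)
    (hVL : VL = {x | (T.deleteEdges {s(vL, vR)}).Reachable vL x})
    (hVR : VR = {x | (T.deleteEdges {s(vL, vR)}).Reachable vR x})
    (hone : Xor' (∃ i, p i ∈ VL ∧ q i ∈ VL) (∃ i, p i ∈ VR ∧ q i ∈ VR))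
    (B : Set V) (hfeas : (∀ i, (p i ∈ B ↔ q i ∉ B)))
    (Sb : SimpleGraph B) (Sr : SimpleGraph (Bᶜ : Set V))
    (hSb : Sb.IsTree) (hSr : Sr.IsTree) :
    (∃ u v : B, Sb.Adj u v ∧ ((u.1 ∈ VL ∧ v.1 ∉ VL) ∨ (u.1 ∉ VL ∧ v.1 ∈ VL)) ∧ w vL vR ≤ w u.1 v.1) ∨
    (∃ u v : (Bᶜ : Set V), Sr.Adj u v ∧ ((u.1 ∈ VL ∧ v.1 ∉ VL) ∨ (u.1 ∉ VL ∧ v.1 ∈ VL)) ∧ w vL vR ≤ w u.1 v.1) := by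
  subst hVL hVR
  set H := T.deleteEdges {s(vL, vR)}
  have hcut : ∀ u v, H.Reachable vL u → ¬ H.Reachable vL v → w vL vR ≤ w u v := fun u v =>
    hT.weight_le_of_reachable_of_not_reachable hw_symm hadj
  have hsep : ∀ x, H.Reachable vR x → ¬ H.Reachable vL x := fun x hRx hLx =>
    hT.1.not_reachable_deleteEdges hadj (hLx.trans hRx.symm)
  have hSb' := hSb.connected.preconnected
  have hSr' := hSr.connected.preconnected
  rcases Xor.or hone with ⟨i, hp, hq⟩ | ⟨i, hp, hq⟩
  · rcases exists_adj_mem_notMem_of_pair_mem (hfeas i) hp hq (hsep vR .rfl) hSb' hSr'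
      with ⟨u, v, h, hu, hv⟩ | ⟨u, v, h, hu, hv⟩
    exacts [Or.inl ⟨u, v, h, Or.inl ⟨hu, hv⟩, hcut _ _ hu hv⟩,
      Or.inr ⟨u, v, h, Or.inl ⟨hu, hv⟩, hcut _ _ hu hv⟩]
  · rcases exists_adj_mem_notMem_of_pair_mem (Y := {x | H.Reachable vL x}ᶜ) (hfeas i)
      (hsep _ hp) (hsep _ hq) (not_not.mpr .rfl) hSb' hSr' with
      ⟨u, v, h, hu, hv⟩ | ⟨u, v, h, hu, hv⟩
    all_goals
      have hvL : H.Reachable vL v := not_not.mp hv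
      have hw : w vL vR ≤ w u v := (hcut _ _ hvL hu).trans_eq (hw_symm _ _)
    exacts [Or.inl ⟨u, v, h, Or.inr ⟨hu, hvL⟩, hw⟩,
      Or.inr ⟨u, v, h, Or.inr ⟨hu, hvL⟩, hw⟩]

theorem stmt_7 {V : Type*} [Fintype V]
    {n : ℕ} (hn : 2 ≤ n)
    (p q : Fin n → V) (hpq : Function.Bijective (Sum.elim p q))
    (w : V → V → ℝ)
    (hw_self : ∀ v, w v v = 0)
    (hw_symm : ∀ u v, w u v = w v u)
    (hw_nonneg : ∀ u v, 0 ≤ w u v)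
    (hw_tri : ∀ u v x, w u v ≤ w u x + w x v)
    (T : SimpleGraph V) (hT : IsMST w T)
    (vL vR : V) (hadj : T.Adj vL vR)
    (hmax : ∀ a b, T.Adj a b → w a b ≤ w vL vR)
    (VL VR : Set V)
    (hVL : VL = {x | (T.deleteEdges {s(vL, vR)}).Reachable vL x})
    (hVR : VR = {x | (T.deleteEdges {s(vL, vR)}).Reachable vR x})
    (hone : Xor' (∃ i, p i ∈ VL ∧ q i ∈ VL) (∃ i, p i ∈ VR ∧ q i ∈ VR))
    (B : Set V) (hfeas : (∀ i, (p i ∈ B ↔ q i ∉ B)))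
    (Sb : SimpleGraph B) (Sr : SimpleGraph (Bᶜ : Set V))
    (hSb : Sb.IsTree) (hSr : Sr.IsTree) :
    (∃ u v : B, Sb.Adj u v ∧ ((u.1 ∈ VL ∧ v.1 ∉ VL) ∨ (u.1 ∉ VL ∧ v.1 ∈ VL)) ∧ w vL vR ≤ w u.1 v.1) ∨
    (∃ u v : (Bᶜ : Set V), Sr.Adj u v ∧ ((u.1 ∈ VL ∧ v.1 ∉ VL) ∨ (u.1 ∉ VL ∧ v.1 ∈ VL)) ∧ w vL vR ≤ w u.1 v.1) :=
  stmt_7_general p q w hw_symm T hT vL vR hadj VL VR hVL hVR hone B hfeas Sb Sr hSb hSr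
end
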